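/- arXiv:0907.4577 — 6 statements merged into one kernel-verified Lean document; each statement's English description precedes it below -/
import Mathlib

section
/- Let ω be a non-principal ultrafilter on ℕ, let δ' ≥ 0 and D ≥ 0, and for each n let X_n be a nonempty metric space with diam(X_n) ≤ D. If the set {n ∈ ℕ : X_n is not δ'-hyperbolic} belongs to ω, then there exist sequences (x_n), (y_n), (z_n), (t_n) with x_n, y_n, z_n, t_n ∈ X_n for all n, such that all the ω-limits of the Gromov products below exist and lim_ω (x_n|z_n)_{t_n} ≤ min{ lim_ω (x_n|y_n)_{t_n}, lim_ω (y_n|z_n)_{t_n} } − δ'. (This expresses that if the ultralimit of uniformly bounded spaces X_n is δ-hyperbolic with δ < δ', then X_n is δ'-hyperbolic ω-almost surely.) -/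
/-!
Every index `n` in the ω-large set where `X n` is not `δ'`-hyperbolic supplies a quadruple of
points violating the four point inequality by more than `δ'`; elsewhere any points do. Gromov
products lie in `[0, D]`, so by compactness they have ω-limits, and the strict inequalities,
holding ω-almost surely, pass to the limit as non-strict ones.
-/

open Filter Topology

/-- The Gromov product `(y|z)_x` in a metric space. -/
noncomputable def gromovProduct {X : Type*} [MetricSpace X] (x y z : X) : ℝ :=
  (dist x y + dist x z - dist y z) / 2

/-- A metric space is `δ`-hyperbolic if the four point inequality holds. -/
def IsDeltaHyperbolic (X : Type*) [MetricSpace X] (δ : ℝ) : Prop :=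
  ∀ x y z t : X,
    gromovProduct t x z ≥ min (gromovProduct t x y) (gromovProduct t y z) - δ

lemma IsCompact.exists_tendsto_of_forall_mem {α X : Type*} [TopologicalSpace X] {s : Set X}
    (hs : IsCompact s) (ω : Ultrafilter α) {f : α → X} (hf : ∀ a, f a ∈ s) :
    ∃ x ∈ s, Tendsto f ω (𝓝 x) :=
  hs.ultrafilter_le_nhds' (ω.map f) (Ultrafilter.mem_map.2 (univ_mem' hf))

section GromovProduct

variable {X : Type*} [MetricSpace X]

lemma gromovProduct_nonneg (x y z : X) : 0 ≤ gromovProduct x y z := by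
  have := dist_triangle_left y z x
  unfold gromovProduct
  linarith

lemma gromovProduct_le_dist (x y z : X) : gromovProduct x y z ≤ dist x y := by
  have := dist_triangle x y z
  unfold gromovProduct
  linarith

lemma not_isDeltaHyperbolic_iff {δ : ℝ} :
    ¬ IsDeltaHyperbolic X δ ↔ ∃ x y z t : X,
      gromovProduct t x z < min (gromovProduct t x y) (gromovProduct t y z) - δ := by
  simp only [IsDeltaHyperbolic, not_forall, not_le, ge_iff_le]

end GromovProduct

section Sequences

variable {ι : Type*} {X : ι → Type*} [∀ i, MetricSpace (X i)]

lemma exists_tendsto_gromovProduct (ω : Ultrafilter ι) {D : ℝ}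
    (hdiam : ∀ i, ∀ a b : X i, dist a b ≤ D) (t x y : ∀ i, X i) :
    ∃ L, Tendsto (fun i => gromovProduct (t i) (x i) (y i)) ω (𝓝 L) := by
  obtain ⟨L, -, hL⟩ := isCompact_Icc.exists_tendsto_of_forall_mem ω fun i =>
    ⟨gromovProduct_nonneg (t i) (x i) (y i),
      (gromovProduct_le_dist (t i) (x i) (y i)).trans (hdiam i _ _)⟩
  exact ⟨L, hL⟩

lemma exists_eventually_gromovProduct_lt_of_not_isDeltaHyperbolic [∀ i, Nonempty (X i)]
    {l : Filter ι} {δ : ℝ} (hbad : {i | ¬ IsDeltaHyperbolic (X i) δ} ∈ l) :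
    ∃ x y z t : ∀ i, X i, ∀ᶠ i in l, gromovProduct (t i) (x i) (z i) <
      min (gromovProduct (t i) (x i) (y i)) (gromovProduct (t i) (y i) (z i)) - δ := by
  have hchoice : ∀ i, ∃ x y z t : X i, ¬ IsDeltaHyperbolic (X i) δ →
      gromovProduct t x z < min (gromovProduct t x y) (gromovProduct t y z) - δ := by
    intro i
    by_cases hi : IsDeltaHyperbolic (X i) δ
    · obtain ⟨p⟩ : Nonempty (X i) := inferInstance
      exact ⟨p, p, p, p, absurd hi⟩
    · obtain ⟨x, y, z, t, hlt⟩ := not_isDeltaHyperbolic_iff.mp hi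
      exact ⟨x, y, z, t, fun _ => hlt⟩
  choose x y z t hlt using hchoice
  exact ⟨x, y, z, t, mem_of_superset hbad fun i hi => hlt i hi⟩

end Sequences

theorem exists_sequences_of_not_hyperbolic_general
    (ω : Ultrafilter ℕ)
    (δ' D : ℝ)
    (X : ℕ → Type*) [∀ n, MetricSpace (X n)] [∀ n, Nonempty (X n)]
    (hdiam : ∀ n, ∀ a b : X n, dist a b ≤ D)
    (hbad : {n | ¬ IsDeltaHyperbolic (X n) δ'} ∈ ω) :
    ∃ (x y z t : ∀ n, X n) (Lxz Lxy Lyz : ℝ),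
      Tendsto (fun n => gromovProduct (t n) (x n) (z n)) ω (nhds Lxz) ∧
      Tendsto (fun n => gromovProduct (t n) (x n) (y n)) ω (nhds Lxy) ∧
      Tendsto (fun n => gromovProduct (t n) (y n) (z n)) ω (nhds Lyz) ∧
      Lxz ≤ min Lxy Lyz - δ' := by
  obtain ⟨x, y, z, t, hlt⟩ := exists_eventually_gromovProduct_lt_of_not_isDeltaHyperbolic hbad
  obtain ⟨Lxz, hxz⟩ := exists_tendsto_gromovProduct ω hdiam t x z
  obtain ⟨Lxy, hxy⟩ := exists_tendsto_gromovProduct ω hdiam t x y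
  obtain ⟨Lyz, hyz⟩ := exists_tendsto_gromovProduct ω hdiam t y z
  refine ⟨x, y, z, t, Lxz, Lxy, Lyz, hxz, hxy, hyz, ?_⟩
  exact le_of_tendsto_of_tendsto hxz ((hxy.min hyz).sub_const δ') (hlt.mono fun _ h => h.le)

/-- if the spaces `X n` have diameter at most `D` and are
ω-almost surely not `δ'`-hyperbolic, then there are sequences of points whose
Gromov products ω-converge and violate the `δ'`-hyperbolicity inequality in
the limit. -/
theorem exists_sequences_of_not_hyperbolic
    (ω : Ultrafilter ℕ) (hω : (ω : Filter ℕ) ≤ Filter.cofinite)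
    (δ' D : ℝ) (hδ' : 0 ≤ δ') (hD : 0 ≤ D)
    (X : ℕ → Type*) [∀ n, MetricSpace (X n)] [∀ n, Nonempty (X n)]
    (hdiam : ∀ n, ∀ a b : X n, dist a b ≤ D)
    (hbad : {n | ¬ IsDeltaHyperbolic (X n) δ'} ∈ ω) :
    ∃ (x y z t : ∀ n, X n) (Lxz Lxy Lyz : ℝ),
      Tendsto (fun n => gromovProduct (t n) (x n) (z n)) ω (nhds Lxz) ∧
      Tendsto (fun n => gromovProduct (t n) (x n) (y n)) ω (nhds Lxy) ∧
      Tendsto (fun n => gromovProduct (t n) (y n) (z n)) ω (nhds Lyz) ∧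
      Lxz ≤ min Lxy Lyz - δ' :=
  exists_sequences_of_not_hyperbolic_general ω δ' D X hdiam hbad
end

section
/- Let δ, α ≥ 0 and let X be a geodesic, δ-hyperbolic metric space. If Y and Z are two α-quasi-convex subsets of X, then for all A ≥ 0, diam(Y^{+A} ∩ Z^{+A}) ≤ diam(Y^{+α+10δ} ∩ Z^{+α+10δ}) + 2A + 20δ, where diameters are taken in [0,∞]. -/
/-- `S` is a geodesic segment from `a` to `b`. -/
def IsGeodesicSegment {X : Type*} [MetricSpace X] (S : Set X) (a b : X) : Prop :=
  ∃ γ : ℝ → X, γ 0 = a ∧ γ (dist a b) = b ∧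
    (∀ s ∈ Set.Icc (0 : ℝ) (dist a b), ∀ u ∈ Set.Icc (0 : ℝ) (dist a b),
      dist (γ s) (γ u) = |s - u|) ∧
    S = γ '' Set.Icc (0 : ℝ) (dist a b)

/-- The `A`-neighbourhood `Y^{+A}` of a subset: points at distance at most `A`
from `Y`. -/
def nbhd {X : Type*} [MetricSpace X] (A : ℝ) (Y : Set X) : Set X :=
  {x | ∃ y ∈ Y, dist x y ≤ A}

/-- A subset `Y` is `α`-quasi-convex if every geodesic segment between two of
its points is contained in `Y^{+α}`. -/
def IsQuasiConvex {X : Type*} [MetricSpace X] (α : ℝ) (Y : Set X) : Prop :=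
  ∀ a ∈ Y, ∀ b ∈ Y, ∀ S : Set X, IsGeodesicSegment S a b → S ⊆ nbhd α Y

/-- Any point is `(y|y')_m + 2δ`-close to a geodesic from `y` to `y'`. -/
lemma near_geod {X : Type*} [MetricSpace X] {δ : ℝ}
    (hhyp : IsDeltaHyperbolic X δ) (m y y' : X) (S : Set X)
    (hS : IsGeodesicSegment S y y') :
    ∃ q ∈ S, dist m q ≤ gromovProduct m y y' + 2 * δ := by
  obtain ⟨γ, h0, hd, hiso, hSdef⟩ := hS
  set d := dist y y' with hdd
  set s := (dist y m + d - dist m y') / 2 with hsdef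
  have hs2 : 2 * s = dist y m + d - dist m y' := by rw [hsdef]; ring
  have hmy : dist y m = dist m y := dist_comm y m
  have ht1 : dist m y' ≤ dist m y + d := dist_triangle m y y'
  have ht2 : dist y m ≤ d + dist y' m := dist_triangle y y' m
  have hmy' : dist y' m = dist m y' := dist_comm y' m
  have hs0 : 0 ≤ s := by rw [hsdef]; linarith
  have hsd : s ≤ d := by rw [hsdef]; linarith
  have hsIcc : s ∈ Set.Icc (0:ℝ) d := ⟨hs0, hsd⟩
  have h0Icc : (0:ℝ) ∈ Set.Icc (0:ℝ) d := ⟨le_refl _, le_trans hs0 hsd⟩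
  have hdIcc : d ∈ Set.Icc (0:ℝ) d := ⟨le_trans hs0 hsd, le_refl _⟩
  refine ⟨γ s, by rw [hSdef]; exact ⟨s, hsIcc, rfl⟩, ?_⟩
  have hyq : dist y (γ s) = s := by
    have := hiso 0 h0Icc s hsIcc
    rw [h0] at this
    rw [this, abs_of_nonpos (by linarith)]; ring
  have hqy' : dist (γ s) y' = d - s := by
    have := hiso s hsIcc d hdIcc
    rw [hd] at this
    rw [this, abs_of_nonpos (by linarith)]; ring
  have hkey := hhyp y (γ s) y' m
  have heq : gromovProduct m y (γ s) = gromovProduct m (γ s) y' := by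
    simp only [gromovProduct, hyq, hqy']
    linarith
  rw [ge_iff_le, heq, min_self] at hkey
  simp only [gromovProduct, hyq, hqy'] at hkey ⊢
  linarith

/-- A point on a geodesic `[x,x']`, far from both endpoints, is in the
`(α+10δ)`-neighbourhood of a quasi-convex set `Y` when `x, x' ∈ Y^{+A}`. -/
lemma deep_point_mem {X : Type*} [MetricSpace X] {δ α A : ℝ}
    (hδ : 0 ≤ δ) (hα : 0 ≤ α)
    (hgeo : ∀ a b : X, ∃ S, IsGeodesicSegment S a b)
    (hhyp : IsDeltaHyperbolic X δ)
    {Y : Set X} (hY : IsQuasiConvex α Y)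
    {x x' m : X} (hx : x ∈ nbhd A Y) (hx' : x' ∈ nbhd A Y)
    (hgp : gromovProduct m x x' = 0)
    (h1 : A + 10 * δ ≤ dist m x) (h2 : A + 10 * δ ≤ dist m x') :
    m ∈ nbhd (α + 10 * δ) Y := by
  obtain ⟨y, hyY, hxy⟩ := hx
  obtain ⟨y', hy'Y, hxy'⟩ := hx'
  have ha := hhyp x y x' m
  have hb := hhyp y y' x' m
  rw [hgp] at ha
  -- one of the three Gromov products is ≤ 2δ
  have hcases : gromovProduct m x y ≤ 2 * δ ∨ gromovProduct m y y' ≤ 2 * δ ∨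
      gromovProduct m y' x' ≤ 2 * δ := by
    rcases le_total (gromovProduct m x y) (gromovProduct m y x') with h | h
    · left
      have := min_le_left (gromovProduct m x y) (gromovProduct m y x')
      rw [min_eq_left h] at ha; linarith
    · rw [min_eq_right h] at ha
      rcases le_total (gromovProduct m y y') (gromovProduct m y' x') with h' | h'
      · right; left; rw [min_eq_left h'] at hb; linarith
      · right; right; rw [min_eq_right h'] at hb; linarith
  rcases hcases with hc | hc | hc
  · -- forces dist m y ≤ 0
    have hd1 : dist m y ≤ dist m x + dist x y := dist_triangle m x y
    simp only [gromovProduct] at hc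
    refine ⟨y, hyY, ?_⟩
    have : dist m y ≤ 0 := by
      have h5 : dist m x ≤ dist m y + dist x y := by
        have := dist_triangle m y x; rwa [dist_comm y x] at this
      linarith
    linarith
  · -- m is close to a geodesic from y to y', hence to Y
    obtain ⟨S, hS⟩ := hgeo y y'
    obtain ⟨q, hqS, hqd⟩ := near_geod hhyp m y y' S hS
    obtain ⟨w, hwY, hqw⟩ := hY y hyY y' hy'Y S hS hqS
    refine ⟨w, hwY, ?_⟩
    have := dist_triangle m q w
    linarith
  · have hd1 : dist m y' ≤ dist m x' + dist x' y' := dist_triangle m x' y'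
    simp only [gromovProduct] at hc
    refine ⟨y', hy'Y, ?_⟩
    have h5 : dist m x' ≤ dist m y' + dist y' x' := dist_triangle m y' x'
    have hcm : dist y' x' = dist x' y' := dist_comm y' x'
    have : dist m y' ≤ 0 := by linarith
    linarith

/-- overlap estimate for neighbourhoods of two `α`-quasi-convex
subsets of a geodesic `δ`-hyperbolic space. -/
theorem diam_inter_nbhd_quasiConvex
    {X : Type*} [MetricSpace X] (δ α : ℝ) (hδ : 0 ≤ δ) (hα : 0 ≤ α)
    (hgeo : ∀ a b : X, ∃ S, IsGeodesicSegment S a b)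
    (hhyp : IsDeltaHyperbolic X δ)
    (Y Z : Set X) (hY : IsQuasiConvex α Y) (hZ : IsQuasiConvex α Z)
    (A : ℝ) (hA : 0 ≤ A) :
    EMetric.diam (nbhd A Y ∩ nbhd A Z) ≤
      EMetric.diam (nbhd (α + 10 * δ) Y ∩ nbhd (α + 10 * δ) Z) +
        ENNReal.ofReal (2 * A + 20 * δ) := by

  set B := EMetric.diam (nbhd (α + 10 * δ) Y ∩ nbhd (α + 10 * δ) Z) with hB
  apply EMetric.diam_le
  rintro x ⟨hxY, hxZ⟩ x' ⟨hx'Y, hx'Z⟩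
  set d := dist x x' with hdd
  rcases le_or_gt d (2 * A + 20 * δ) with hcase | hcase
  · calc edist x x' = ENNReal.ofReal d := by rw [edist_dist]
      _ ≤ ENNReal.ofReal (2 * A + 20 * δ) := ENNReal.ofReal_le_ofReal hcase
      _ ≤ B + ENNReal.ofReal (2 * A + 20 * δ) := le_add_self
  · obtain ⟨S, γ, h0, hd, hiso, hSdef⟩ := hgeo x x'
    have hIcc1 : A + 10 * δ ∈ Set.Icc (0:ℝ) d := ⟨by linarith, by linarith⟩
    have hIcc2 : d - (A + 10 * δ) ∈ Set.Icc (0:ℝ) d := ⟨by linarith, by linarith⟩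
    have h0Icc : (0:ℝ) ∈ Set.Icc (0:ℝ) d := ⟨le_refl _, by linarith⟩
    have hdIcc : d ∈ Set.Icc (0:ℝ) d := ⟨by linarith, le_refl _⟩
    set p := γ (A + 10 * δ) with hp
    set p' := γ (d - (A + 10 * δ)) with hp'
    have hpx : dist p x = A + 10 * δ := by
      have := hiso (A + 10 * δ) hIcc1 0 h0Icc
      rw [h0] at this; rw [this, abs_of_nonneg (by linarith)]; ring
    have hpx' : dist p x' = d - (A + 10 * δ) := by
      have := hiso (A + 10 * δ) hIcc1 d hdIcc
      rw [hd] at this; rw [this, abs_of_nonpos (by linarith)]; ring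
    have hp'x : dist p' x = d - (A + 10 * δ) := by
      have := hiso (d - (A + 10 * δ)) hIcc2 0 h0Icc
      rw [h0] at this; rw [this, abs_of_nonneg (by linarith)]; ring
    have hp'x' : dist p' x' = A + 10 * δ := by
      have := hiso (d - (A + 10 * δ)) hIcc2 d hdIcc
      rw [hd] at this; rw [this, abs_of_nonpos (by linarith)]; ring
    have hpp' : dist p p' = d - (2 * A + 20 * δ) := by
      have := hiso (A + 10 * δ) hIcc1 (d - (A + 10 * δ)) hIcc2
      rw [this, abs_of_nonpos (by linarith)]; ring
    have hgpp : gromovProduct p x x' = 0 := by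
      simp only [gromovProduct, hpx, hpx', ← hdd]; ring
    have hgpp' : gromovProduct p' x x' = 0 := by
      simp only [gromovProduct, hp'x, hp'x', ← hdd]; ring
    have hpmem : p ∈ nbhd (α + 10 * δ) Y ∩ nbhd (α + 10 * δ) Z :=
      ⟨deep_point_mem hδ hα hgeo hhyp hY hxY hx'Y hgpp (le_of_eq hpx.symm)
        (by rw [hpx']; linarith),
       deep_point_mem hδ hα hgeo hhyp hZ hxZ hx'Z hgpp (le_of_eq hpx.symm)
        (by rw [hpx']; linarith)⟩
    have hp'mem : p' ∈ nbhd (α + 10 * δ) Y ∩ nbhd (α + 10 * δ) Z :=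
      ⟨deep_point_mem hδ hα hgeo hhyp hY hxY hx'Y hgpp' (by rw [hp'x]; linarith)
        (le_of_eq hp'x'.symm),
       deep_point_mem hδ hα hgeo hhyp hZ hxZ hx'Z hgpp' (by rw [hp'x]; linarith)
        (le_of_eq hp'x'.symm)⟩
    have hdiam : edist p p' ≤ B := EMetric.edist_le_diam_of_mem hpmem hp'mem
    calc edist x x' = ENNReal.ofReal d := by rw [edist_dist]
      _ = ENNReal.ofReal (dist p p') + ENNReal.ofReal (2 * A + 20 * δ) := by
          rw [← ENNReal.ofReal_add (by rw [hpp']; linarith) (by linarith), hpp']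
          ring_nf
      _ ≤ B + ENNReal.ofReal (2 * A + 20 * δ) := by
          gcongr
          rw [← edist_dist]; exact hdiam
end

section
/- Fix r₀ > 0 and define μ : [0,∞) → ℝ by μ(t) = arccosh( cosh²(r₀) − sinh²(r₀)·cos( min{π, t/sinh(r₀)} ) ). Then μ is non-decreasing, continuous and concave on [0,∞), and μ is subadditive: for all t, t' ≥ 0, μ(t + t') ≤ μ(t) + μ(t'). -/
/-- The inverse hyperbolic cosine, defined (for `x ≥ 1`) by
`arcosh x = log (x + sqrt (x² − 1))`. -/
noncomputable def arcosh (x : ℝ) : ℝ :=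
  Real.log (x + Real.sqrt (x ^ 2 - 1))

/-- The comparison function `μ` for the hyperbolic cone of radius `r₀`:
`μ(t) = arcosh( cosh²r₀ − sinh²r₀ · cos(min{π, t/sinh r₀}) )`. -/
noncomputable def mucone (r₀ t : ℝ) : ℝ :=
  arcosh (Real.cosh r₀ ^ 2 -
    Real.sinh r₀ ^ 2 * Real.cos (min Real.pi (t / Real.sinh r₀)))

/-!
Writing `θ = min{π, t / sinh r₀}`, the half-angle formula `cos θ = 1 - 2 sin² (θ/2)` and
`cosh (2y) = 1 + 2 sinh² y` give `μ(t) = 2 arsinh (sinh r₀ · sin (θ/2))`. On `t ≥ 0` this is a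
composition of nondecreasing concave maps: the truncated linear map `t ↦ θ/2` into `[0, π/2]`,
`sin` on `[0, π/2]`, and `arsinh` on `[0, ∞)`. Concavity together with `μ(0) = 0` yields
subadditivity.
-/

open Real Set

section Composition

variable {𝕜 E α β : Type*} [Semiring 𝕜] [PartialOrder 𝕜] [AddCommMonoid E] [AddCommMonoid α]
  [PartialOrder α] [AddCommMonoid β] [PartialOrder β] [SMul 𝕜 E] [SMul 𝕜 α] [SMul 𝕜 β]

theorem ConcaveOn.comp_of_mapsTo {s : Set E} {t : Set β} {f : E → β} {g : β → α}
    (hg : ConcaveOn 𝕜 t g) (hf : ConcaveOn 𝕜 s f) (hg' : MonotoneOn g t) (hst : MapsTo f s t) :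
    ConcaveOn 𝕜 s (g ∘ f) :=
  ⟨hf.1, fun _ hx _ hy _ _ ha hb hab =>
    (hg.2 (hst hx) (hst hy) ha hb hab).trans <|
      hg' (hg.1 (hst hx) (hst hy) ha hb hab) (hst <| hf.1 hx hy ha hb hab) (hf.2 hx hy ha hb hab)⟩

end Composition

section Subadditivity

variable {𝕜 : Type*} [Field 𝕜] [LinearOrder 𝕜] [IsStrictOrderedRing 𝕜] {f : 𝕜 → 𝕜}

theorem ConcaveOn.mul_le_map_mul (hf : ConcaveOn 𝕜 (Ici 0) f) (h₀ : 0 ≤ f 0) {a x : 𝕜}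
    (ha₀ : 0 ≤ a) (ha₁ : a ≤ 1) (hx : 0 ≤ x) : a * f x ≤ f (a * x) := by
  have h := hf.2 (mem_Ici.2 hx) (self_mem_Ici (a := (0 : 𝕜))) ha₀ (sub_nonneg.2 ha₁)
    (add_sub_cancel a 1)
  simp only [smul_eq_mul, mul_zero, add_zero] at h
  nlinarith [mul_nonneg (sub_nonneg.2 ha₁) h₀]

theorem ConcaveOn.map_add_le (hf : ConcaveOn 𝕜 (Ici 0) f) (h₀ : 0 ≤ f 0) {x y : 𝕜}
    (hx : 0 ≤ x) (hy : 0 ≤ y) : f (x + y) ≤ f x + f y := by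
  rcases (add_nonneg hx hy).eq_or_lt with hxy | hxy
  · obtain ⟨rfl, rfl⟩ : x = 0 ∧ y = 0 := ⟨by linarith, by linarith⟩
    simpa using h₀
  have share {u : 𝕜} (hu : 0 ≤ u) (hux : u ≤ x + y) : u / (x + y) * f (x + y) ≤ f u := by
    simpa [div_mul_cancel₀ u hxy.ne'] using
      hf.mul_le_map_mul h₀ (div_nonneg hu hxy.le) ((div_le_one hxy).2 hux) hxy.le
  calc f (x + y) = x / (x + y) * f (x + y) + y / (x + y) * f (x + y) := by
        rw [← add_mul, ← add_div, div_self hxy.ne', one_mul]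
    _ ≤ f x + f y := add_le_add (share hx (by linarith)) (share hy (by linarith))

end Subadditivity

theorem Real.concaveOn_arsinh : ConcaveOn ℝ (Ici 0) arsinh := by
  refine AntitoneOn.concaveOn_of_deriv (convex_Ici 0) continuous_arsinh.continuousOn
    differentiable_arsinh.differentiableOn ?_
  have hderiv : deriv arsinh = fun x => (√(1 + x ^ 2))⁻¹ :=
    funext fun x => (hasDerivAt_arsinh x).deriv
  rw [hderiv, interior_Ici]
  intro x hx y _ hxy
  have hx : 0 < x := hx
  exact inv_anti₀ (by positivity) (sqrt_le_sqrt (by nlinarith))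

theorem Real.arcosh_one_add_two_mul_sq {x : ℝ} (hx : 0 ≤ x) :
    Real.arcosh (1 + 2 * x ^ 2) = 2 * arsinh x := by
  have hcosh : 1 + 2 * x ^ 2 = cosh (2 * arsinh x) := by
    rw [cosh_two_mul, cosh_sq', sinh_arsinh]; ring
  rw [hcosh, arcosh_cosh (mul_nonneg zero_le_two (arsinh_nonneg_iff.2 hx))]

/-- Half of the cone angle `θ = min{π, t / s}` of `mucone`, with `s = sinh r₀`. -/
noncomputable def halfAngle (s t : ℝ) : ℝ := min π (t / s) / 2

theorem halfAngle_mem_Icc {s t : ℝ} (hs : 0 ≤ s) (ht : 0 ≤ t) :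
    halfAngle s t ∈ Icc 0 (π / 2) := by
  have := le_min pi_pos.le (div_nonneg ht hs)
  have := min_le_left π (t / s)
  constructor <;> unfold halfAngle <;> linarith

theorem monotone_halfAngle {s : ℝ} (hs : 0 ≤ s) : Monotone (halfAngle s) := fun x y hxy => by
  unfold halfAngle; gcongr

theorem concaveOn_halfAngle (s : ℝ) : ConcaveOn ℝ univ (halfAngle s) := by
  have hmin : ConcaveOn ℝ univ fun t : ℝ => min π (t / s) :=
    (concaveOn_const π convex_univ).inf <|
      ((LinearMap.lsmul ℝ ℝ s⁻¹).concaveOn convex_univ).congr fun t _ => by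
        simp [div_eq_inv_mul]
  exact (hmin.smul (by norm_num : (0 : ℝ) ≤ 2⁻¹)).congr fun t _ => by
    simp [halfAngle, div_eq_inv_mul, mul_comm]

theorem continuous_halfAngle (s : ℝ) : Continuous (halfAngle s) := by
  unfold halfAngle; fun_prop

theorem monotoneOn_two_mul_arsinh_mul_sin {s : ℝ} (hs : 0 ≤ s) :
    MonotoneOn (fun u => 2 * arsinh (s * sin u)) (Icc 0 (π / 2)) := fun u hu v hv huv => by
  have hsin := strictMonoOn_sin.monotoneOn.mono (Icc_subset_Icc_left (by linarith [pi_pos]))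
    hu hv huv
  exact mul_le_mul_of_nonneg_left (arsinh_le_arsinh.2 (mul_le_mul_of_nonneg_left hsin hs))
    zero_le_two

theorem concaveOn_two_mul_arsinh_mul_sin {s : ℝ} (hs : 0 ≤ s) :
    ConcaveOn ℝ (Icc 0 (π / 2)) fun u => 2 * arsinh (s * sin u) := by
  have hsin : ConcaveOn ℝ (Icc 0 (π / 2)) sin :=
    strictConcaveOn_sin_Icc.concaveOn.subset (Icc_subset_Icc_right (by linarith [pi_pos]))
      (convex_Icc _ _)
  have hmaps : MapsTo (fun u => s * sin u) (Icc 0 (π / 2)) (Ici 0) := fun u hu =>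
    mul_nonneg hs (sin_nonneg_of_nonneg_of_le_pi hu.1 (by linarith [hu.2, pi_pos]))
  exact (concaveOn_arsinh.comp_of_mapsTo (hsin.smul hs)
    (arsinh_strictMono.monotone.monotoneOn _) hmaps).smul zero_le_two

theorem mucone_eq_two_mul_arsinh {r₀ t : ℝ} (hr₀ : 0 < r₀) (ht : 0 ≤ t) :
    mucone r₀ t = 2 * arsinh (sinh r₀ * sin (halfAngle (sinh r₀) t)) := by
  have hs := (sinh_pos_iff.2 hr₀).le
  obtain ⟨hθ₀, hθ₁⟩ := halfAngle_mem_Icc hs ht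
  have hsin := sin_nonneg_of_nonneg_of_le_pi hθ₀ (by linarith [pi_pos])
  have harg : cosh r₀ ^ 2 - sinh r₀ ^ 2 * cos (min π (t / sinh r₀)) =
      1 + 2 * (sinh r₀ * sin (halfAngle (sinh r₀) t)) ^ 2 := by
    rw [show min π (t / sinh r₀) = 2 * halfAngle (sinh r₀) t by unfold halfAngle; ring,
      cos_two_mul_eq_one_sub, cosh_sq']
    ring
  rw [mucone, harg]
  exact arcosh_one_add_two_mul_sq (mul_nonneg hs hsin)

theorem mucone_zero (r₀ : ℝ) : mucone r₀ 0 = 0 := by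
  simp [mucone, _root_.arcosh, pi_pos.le]

/-- `μ` is non-decreasing, continuous and concave on `[0,∞)`,
and subadditive there. -/
theorem mucone_monotone_continuous_concave_subadditive
    (r₀ : ℝ) (hr₀ : 0 < r₀) :
    MonotoneOn (mucone r₀) (Set.Ici (0 : ℝ)) ∧
    ContinuousOn (mucone r₀) (Set.Ici (0 : ℝ)) ∧
    ConcaveOn ℝ (Set.Ici (0 : ℝ)) (mucone r₀) ∧
    ∀ t t' : ℝ, 0 ≤ t → 0 ≤ t' →
      mucone r₀ (t + t') ≤ mucone r₀ t + mucone r₀ t' := by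
  have hs := (sinh_pos_iff.2 hr₀).le
  set g : ℝ → ℝ := fun u => 2 * arsinh (sinh r₀ * sin u)
  have hmaps : MapsTo (halfAngle (sinh r₀)) (Ici 0) (Icc 0 (π / 2)) := fun _ ht =>
    halfAngle_mem_Icc hs ht
  have heq : EqOn (g ∘ halfAngle (sinh r₀)) (mucone r₀) (Ici 0) := fun _ ht =>
    (mucone_eq_two_mul_arsinh hr₀ ht).symm
  have hconc : ConcaveOn ℝ (Ici 0) (mucone r₀) :=
    ((concaveOn_two_mul_arsinh_mul_sin hs).comp_of_mapsTo
      ((concaveOn_halfAngle _).subset (subset_univ _) (convex_Ici 0))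
      (monotoneOn_two_mul_arsinh_mul_sin hs) hmaps).congr heq
  refine ⟨?_, ?_, hconc, fun t t' ht ht' => hconc.map_add_le (mucone_zero r₀).ge ht ht'⟩
  · exact ((monotoneOn_two_mul_arsinh_mul_sin hs).comp
      ((monotone_halfAngle hs).monotoneOn _) hmaps).congr heq
  · have hg : Continuous g :=
      continuous_const.mul (continuous_arsinh.comp (continuous_const.mul continuous_sin))
    exact (hg.comp (continuous_halfAngle _)).continuousOn.congr heq.symm
end

section
/- For all reals a ≥ 1 and t ≥ 0, arccosh(a + t) ≤ arccosh(a) + √(2t). -/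
theorem arcosh_eq_real_arcosh : arcosh = Real.arcosh := rfl

namespace Real

theorem one_add_sq_div_two_le_cosh (x : ℝ) : 1 + x ^ 2 / 2 ≤ cosh x := by
  obtain ⟨y, hy0, hxy⟩ : ∃ y, 0 ≤ y ∧ |x| = 2 * y := ⟨|x| / 2, by positivity, by ring⟩
  have hy : y ^ 2 ≤ sinh y ^ 2 := pow_le_pow_left₀ hy0 (self_le_sinh_iff.2 hy0) 2
  rw [← cosh_abs, ← sq_abs, hxy, cosh_two_mul, cosh_sq']
  linarith

theorem cosh_add_sq_div_two_le_cosh_add {x s : ℝ} (hx : 0 ≤ x) (hs : 0 ≤ s) :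
    cosh x + s ^ 2 / 2 ≤ cosh (x + s) := by
  have hsinh : 0 ≤ sinh x * sinh s :=
    mul_nonneg (sinh_nonneg_iff.2 hx) (sinh_nonneg_iff.2 hs)
  have hcosh : cosh x * (1 + s ^ 2 / 2) ≤ cosh x * cosh s :=
    mul_le_mul_of_nonneg_left (one_add_sq_div_two_le_cosh s) (cosh_pos x).le
  rw [cosh_add]
  nlinarith [one_le_cosh x, sq_nonneg s]

theorem arcosh_le_of_le_cosh {x y : ℝ} (hx : 0 < x) (hy : 0 ≤ y) (h : x ≤ cosh y) :
    Real.arcosh x ≤ y :=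
  arcosh_cosh hy ▸ (arcosh_le_arcosh hx (cosh_pos y)).2 h

end Real

/-- `arcosh(a + t) ≤ arcosh a + √(2t)` for `a ≥ 1` and `t ≥ 0`. -/
theorem arcosh_add_le (a t : ℝ) (ha : 1 ≤ a) (ht : 0 ≤ t) :
    arcosh (a + t) ≤ arcosh a + Real.sqrt (2 * t) := by
  rw [arcosh_eq_real_arcosh]
  have hu : 0 ≤ Real.arcosh a := Real.arcosh_nonneg ha
  have hs : 0 ≤ Real.sqrt (2 * t) := Real.sqrt_nonneg _
  refine Real.arcosh_le_of_le_cosh (by linarith) (add_nonneg hu hs) ?_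
  calc a + t = Real.cosh (Real.arcosh a) + Real.sqrt (2 * t) ^ 2 / 2 := by
        rw [Real.cosh_arcosh ha, Real.sq_sqrt (by linarith)]
        ring
    _ ≤ Real.cosh (Real.arcosh a + Real.sqrt (2 * t)) :=
        Real.cosh_add_sq_div_two_le_cosh_add hu hs
end

section
/- Fix r₀ > 0. Let r ∈ [r₀/2, r₀], r' ∈ [0, r₀] and θ ∈ [0, π], and set D = arccosh( cosh(r)·cosh(r') − sinh(r)·sinh(r')·cos(θ) ). If D ≤ r₀/3, then r' ≥ r₀/6 and θ ≤ (3π/r₀)·D; equivalently, θ·sinh(r₀) ≤ (3π·sinh(r₀)/r₀)·D. (This is the key estimate showing that on the part of a hyperbolic cone at distance at least r₀/2 from the vertex, the radial projection onto the base is Lipschitz with constant 3π·sinh(r₀)/r₀.) -/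
noncomputable def coneDist (r r' θ : ℝ) : ℝ :=
  arcosh (Real.cosh r * Real.cosh r' - Real.sinh r * Real.sinh r' * Real.cos θ)

section

open Real Set

theorem cosh_eq_one_add_two_mul_sinh_half_sq (x : ℝ) : cosh x = 1 + 2 * sinh (x / 2) ^ 2 := by
  conv_lhs => rw [← mul_div_cancel₀ x two_ne_zero]
  rw [cosh_two_mul, cosh_sq']
  ring

theorem cosh_mul_cosh_sub_sinh_mul_sinh_mul_cos (r r' θ : ℝ) :
    cosh r * cosh r' - sinh r * sinh r' * cos θ =
      cosh (r - r') + 2 * (sinh r * sinh r') * sin (θ / 2) ^ 2 := by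
  have hcos : cos θ = 1 - 2 * sin (θ / 2) ^ 2 := by
    rw [← cos_two_mul_eq_one_sub, mul_div_cancel₀ θ two_ne_zero]
  rw [cosh_sub, hcos]
  ring

section ConeDist

variable {r r' : ℝ} (θ : ℝ)

theorem cosh_sub_le_cosh_mul_cosh_sub (h : 0 ≤ sinh r * sinh r') :
    cosh (r - r') ≤ cosh r * cosh r' - sinh r * sinh r' * cos θ := by
  rw [cosh_mul_cosh_sub_sinh_mul_sinh_mul_cos]
  have := mul_nonneg h (sq_nonneg (sin (θ / 2)))
  linarith

-- `arcosh` is definitionally `Real.arcosh`, so Mathlib's lemmas about the latter apply.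
theorem cosh_coneDist (h : 0 ≤ sinh r * sinh r') :
    cosh (coneDist r r' θ) = cosh r * cosh r' - sinh r * sinh r' * cos θ :=
  cosh_arcosh ((one_le_cosh _).trans (cosh_sub_le_cosh_mul_cosh_sub θ h))

theorem coneDist_nonneg (h : 0 ≤ sinh r * sinh r') : 0 ≤ coneDist r r' θ :=
  arcosh_nonneg ((one_le_cosh _).trans (cosh_sub_le_cosh_mul_cosh_sub θ h))

theorem abs_sub_le_coneDist (h : 0 ≤ sinh r * sinh r') : |r - r'| ≤ coneDist r r' θ := by
  have hcosh : cosh (r - r') ≤ cosh (coneDist r r' θ) := by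
    rw [cosh_coneDist θ h]
    exact cosh_sub_le_cosh_mul_cosh_sub θ h
  rwa [cosh_le_cosh, abs_of_nonneg (coneDist_nonneg θ h)] at hcosh

theorem sinh_half_coneDist_sq (h : 0 ≤ sinh r * sinh r') :
    sinh (coneDist r r' θ / 2) ^ 2 =
      sinh ((r - r') / 2) ^ 2 + sinh r * sinh r' * sin (θ / 2) ^ 2 := by
  have := cosh_coneDist θ h
  rw [cosh_mul_cosh_sub_sinh_mul_sinh_mul_cos, cosh_eq_one_add_two_mul_sinh_half_sq,
    cosh_eq_one_add_two_mul_sinh_half_sq (r - r')] at this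
  linarith

theorem mul_sin_half_le_sinh_half_coneDist {s : ℝ} (hs : 0 ≤ s) (hsr : s ≤ sinh r)
    (hsr' : s ≤ sinh r') : s * sin (θ / 2) ≤ sinh (coneDist r r' θ / 2) := by
  have h : 0 ≤ sinh r * sinh r' := mul_nonneg (hs.trans hsr) (hs.trans hsr')
  have hss : s * s ≤ sinh r * sinh r' := mul_le_mul hsr hsr' hs (hs.trans hsr)
  have hsinh : 0 ≤ sinh (coneDist r r' θ / 2) :=
    sinh_nonneg_iff.2 (by linarith [coneDist_nonneg θ h])
  refine le_of_abs_le (abs_le_of_sq_le_sq ?_ hsinh)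
  rw [sinh_half_coneDist_sq θ h, mul_pow]
  nlinarith [sq_nonneg (sinh ((r - r') / 2)), sq_nonneg (sin (θ / 2))]

end ConeDist

theorem convexOn_sinh : ConvexOn ℝ (Ici 0) sinh := by
  refine MonotoneOn.convexOn_of_deriv (convex_Ici 0) continuous_sinh.continuousOn
    differentiable_sinh.differentiableOn ?_
  rw [Real.deriv_sinh, interior_Ici]
  intro x hx y hy hxy
  rwa [cosh_le_cosh, abs_of_pos hx, abs_of_pos hy]

theorem sinh_mul_le_mul_sinh {t x : ℝ} (ht₀ : 0 ≤ t) (ht₁ : t ≤ 1) (hx : 0 ≤ x) :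
    sinh (t * x) ≤ t * sinh x := by
  simpa using convexOn_sinh.2 self_mem_Ici (mem_Ici.2 hx) (sub_nonneg.2 ht₁) ht₀
    (sub_add_cancel 1 t)

theorem angle_le_mul_coneDist {r₀ r r' θ : ℝ} (hr₀ : 0 < r₀) (hr : r₀ / 2 ≤ r)
    (hr' : r₀ / 6 ≤ r') (hθ₀ : 0 ≤ θ) (hθπ : θ ≤ π) (hD : coneDist r r' θ ≤ r₀ / 3) :
    θ ≤ 3 * π / r₀ * coneDist r r' θ := by
  have hsinh : 0 ≤ sinh r * sinh r' :=
    mul_nonneg (sinh_nonneg_iff.2 (by linarith)) (sinh_nonneg_iff.2 (by linarith))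
  have hD₀ := coneDist_nonneg θ hsinh
  set D := coneDist r r' θ
  set s := sinh (r₀ / 6)
  have hs : 0 < s := sinh_pos_iff.2 (by positivity)
  have hlower : s * (θ / π) ≤ sinh (D / 2) := calc
    s * (θ / π) ≤ s * sin (θ / 2) := by
      gcongr
      calc θ / π = 2 / π * (θ / 2) := by ring
        _ ≤ sin (θ / 2) := mul_le_sin (by linarith) (by linarith)
    _ ≤ sinh (D / 2) :=
      mul_sin_half_le_sinh_half_coneDist θ hs.le (sinh_le_sinh.2 (by linarith))
        (sinh_le_sinh.2 hr')
  have hupper : sinh (D / 2) ≤ s * (3 * D / r₀) := calc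
    sinh (D / 2) = sinh (3 * D / r₀ * (r₀ / 6)) := by congr 1; field_simp; ring
    _ ≤ 3 * D / r₀ * s :=
      sinh_mul_le_mul_sinh (by positivity) (by rw [div_le_one hr₀]; linarith)
        (by positivity)
    _ = s * (3 * D / r₀) := mul_comm _ _
  have hratio : θ / π ≤ 3 * D / r₀ := le_of_mul_le_mul_left (hlower.trans hupper) hs
  calc θ = θ / π * π := (div_mul_cancel₀ θ pi_ne_zero).symm
    _ ≤ 3 * D / r₀ * π := by gcongr
    _ = 3 * π / r₀ * D := by ring

end

/-- key Lipschitz estimate for the radial projection of a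
hyperbolic cone onto its base, away from the vertex. -/
theorem cone_projection_lipschitz (r₀ r r' θ : ℝ) (hr₀ : 0 < r₀)
    (hr : r ∈ Set.Icc (r₀ / 2) r₀) (hr' : r' ∈ Set.Icc (0 : ℝ) r₀)
    (hθ : θ ∈ Set.Icc (0 : ℝ) Real.pi)
    (hD : arcosh (Real.cosh r * Real.cosh r' -
        Real.sinh r * Real.sinh r' * Real.cos θ) ≤ r₀ / 3) :
    r₀ / 6 ≤ r' ∧
      θ ≤ (3 * Real.pi / r₀) *
        arcosh (Real.cosh r * Real.cosh r' -
          Real.sinh r * Real.sinh r' * Real.cos θ) := by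
  change coneDist r r' θ ≤ r₀ / 3 at hD
  obtain ⟨hr₁, -⟩ := hr
  obtain ⟨hr'₀, -⟩ := hr'
  have hsinh : 0 ≤ Real.sinh r * Real.sinh r' :=
    mul_nonneg (Real.sinh_nonneg_iff.2 (by linarith)) (Real.sinh_nonneg_iff.2 hr'₀)
  have hr'₆ : r₀ / 6 ≤ r' := by
    linarith [le_abs_self (r - r'), abs_sub_le_coneDist θ hsinh]
  exact ⟨hr'₆, angle_le_mul_coneDist hr₀ hr₁ hr'₆ hθ.1 hθ.2 hD⟩
end

section
/- Let δ ≥ 0 and Δ ≥ 0. Let X be a proper metric space and G a group acting on X by isometries such that the action is metrically proper: for every compact subset C of X, the set {g ∈ G : gC ∩ C ≠ ∅} is finite. Let Y be a subset of X whose stabilizer Stab(Y) = {g ∈ G : gY = Y} acts cocompactly on Y, i.e. there is a compact set K ⊆ Y with Stab(Y)·K = Y. Assume that Stab(Y) is closed in G for the profinite topology: for every g ∈ G with g ∉ Stab(Y), there exists a finite-index normal subgroup N of G with g ∉ Stab(Y)·N. Then there exists a finite-index subgroup G' of G containing Stab(Y) such that for every g ∈ G' with g ∉ Stab(Y), one has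 diam( gY^{+20δ} ∩ Y^{+20δ} ) ≤ Δ. -/
open Pointwise

/-!
Let `K` be a compact set with `S • K = Y`, where `S = Stab(Y)`, and `C` its closed
`20δ`-neighbourhood. If `gY^{+20δ}` meets `Y^{+20δ}`, then translating by elements of `S` produces
an element `h ∈ S g S` with `hC ∩ C ≠ ∅`. By properness only finitely many such `h` lie outside `S`,
and profinite closedness of `S` separates each of them from `S` by a finite-index subgroup `S N_h`.
In the intersection `G'` of these subgroups, every `g ∉ S` has `gY^{+20δ} ∩ Y^{+20δ} = ∅`.
-/

namespace Subgroup

variable {G : Type*} [Group G]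

theorem notMem_sup_of_forall_ne_mul {S N : Subgroup G} [N.Normal] {g : G}
    (hg : ∀ s ∈ S, ∀ n ∈ N, g ≠ s * n) : g ∉ S ⊔ N := by
  rw [← SetLike.mem_coe, mul_normal]
  rintro ⟨s, hs, n, hn, rfl⟩
  exact hg s hs n hn rfl

theorem exists_finiteIndex_le_forall_notMem (S : Subgroup G) {F : Set G} (hF : F.Finite)
    (hsep : ∀ f ∈ F, ∃ N : Subgroup G, N.FiniteIndex ∧ f ∉ S ⊔ N) :
    ∃ G' : Subgroup G, G'.FiniteIndex ∧ S ≤ G' ∧ ∀ f ∈ F, f ∉ G' := by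
  choose N hN hfN using hsep
  have : Finite F := hF.to_subtype
  refine ⟨⨅ f : F, S ⊔ N f f.2, ?_, le_iInf fun _ => le_sup_left, fun f hf hfG => ?_⟩
  · exact finiteIndex_iInf fun f =>
      have := hN f f.2
      finiteIndex_of_le le_sup_right
  · exact hfN f hf (mem_iInf.mp hfG ⟨f, hf⟩)

end Subgroup

section IsometricAction

variable {X G : Type*} [MetricSpace X] [Group G] [MulAction G X]

theorem inv_smul_mem_nbhd_of_mem_nbhd_smul (hiso : ∀ g : G, Isometry (fun x : X => g • x))
    {r : ℝ} {Y : Set X} {g : G} {x : X} (hx : x ∈ nbhd r (g • Y)) : g⁻¹ • x ∈ nbhd r Y := by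
  obtain ⟨_, ⟨y, hy, rfl⟩, hxy⟩ := hx
  refine ⟨y, hy, ?_⟩
  rwa [← (hiso g).dist_eq, smul_inv_smul]

theorem exists_inv_smul_mem_cthickening_of_mem_nbhd_iUnion
    (hiso : ∀ g : G, Isometry (fun x : X => g • x)) {r : ℝ} {K : Set X} {T : Set G} {x : X}
    (hx : x ∈ nbhd r (⋃ s ∈ T, s • K)) : ∃ s ∈ T, s⁻¹ • x ∈ Metric.cthickening r K := by
  obtain ⟨y, hy, hxy⟩ := hx
  simp only [Set.mem_iUnion] at hy
  obtain ⟨s, hs, k, hk, rfl⟩ := hy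
  refine ⟨s, hs, Metric.mem_cthickening_of_dist_le _ k _ _ hk ?_⟩
  rwa [← (hiso s).dist_eq, smul_inv_smul]

theorem exists_smul_cthickening_inter_nonempty (hiso : ∀ g : G, Isometry (fun x : X => g • x))
    {r : ℝ} {K : Set X} {T : Set G} {g : G} {x : X}
    (hx : x ∈ nbhd r (g • ⋃ s ∈ T, s • K) ∩ nbhd r (⋃ s ∈ T, s • K)) :
    ∃ s₁ ∈ T, ∃ s₂ ∈ T,
      ((s₂⁻¹ * g * s₁) • Metric.cthickening r K ∩ Metric.cthickening r K).Nonempty := by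
  obtain ⟨s₁, hs₁, h₁⟩ := exists_inv_smul_mem_cthickening_of_mem_nbhd_iUnion hiso
    (inv_smul_mem_nbhd_of_mem_nbhd_smul hiso hx.1)
  obtain ⟨s₂, hs₂, h₂⟩ := exists_inv_smul_mem_cthickening_of_mem_nbhd_iUnion hiso hx.2
  refine ⟨s₁, hs₁, s₂, hs₂, s₂⁻¹ • x, ?_, h₂⟩
  rw [Set.mem_smul_set_iff_inv_smul_mem, smul_smul]
  simpa [mul_smul, mul_assoc] using h₁

end IsometricAction

theorem exists_finiteIndex_subgroup_small_overlap_general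
    {X : Type*} [MetricSpace X] [ProperSpace X]
    {G : Type*} [Group G] [MulAction G X]
    (hiso : ∀ g : G, Isometry (fun x : X => g • x))
    (hproper : ∀ C : Set X, IsCompact C → Set.Finite {g : G | (g • C) ∩ C ≠ ∅})
    (δ Δ : ℝ)
    (Y : Set X)
    (hcocompact : ∃ K : Set X, IsCompact K ∧ K ⊆ Y ∧
      (⋃ g ∈ MulAction.stabilizer G Y, g • K) = Y)
    (hclosed : ∀ g : G, g ∉ MulAction.stabilizer G Y →
      ∃ N : Subgroup G, N.Normal ∧ N.FiniteIndex ∧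
        ∀ h ∈ MulAction.stabilizer G Y, ∀ n ∈ N, g ≠ h * n) :
    ∃ G' : Subgroup G, G'.FiniteIndex ∧ MulAction.stabilizer G Y ≤ G' ∧
      ∀ g ∈ G', g ∉ MulAction.stabilizer G Y →
        EMetric.diam (nbhd (20 * δ) (g • Y) ∩ nbhd (20 * δ) Y) ≤
          ENNReal.ofReal Δ := by
  obtain ⟨K, hK, -, hKY⟩ := hcocompact
  set S := MulAction.stabilizer G Y
  set C := Metric.cthickening (20 * δ) K
  set F := {f : G | (f • C) ∩ C ≠ ∅} \ S
  have hF : F.Finite := (hproper C hK.cthickening).sdiff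
  obtain ⟨G', hG', hSG', hFG'⟩ := S.exists_finiteIndex_le_forall_notMem hF fun f hf => by
    obtain ⟨N, hN, hNf, hfN⟩ := hclosed f hf.2
    exact ⟨N, hNf, Subgroup.notMem_sup_of_forall_ne_mul hfN⟩
  refine ⟨G', hG', hSG', fun g hg hgS => ?_⟩
  suffices hempty : nbhd (20 * δ) (g • Y) ∩ nbhd (20 * δ) Y = ∅ by
    rw [hempty]
    exact Metric.ediam_empty.trans_le zero_le
  refine Set.eq_empty_of_forall_notMem fun x hx => ?_
  rw [← hKY] at hx
  obtain ⟨s₁, hs₁, s₂, hs₂, hC⟩ := exists_smul_cthickening_inter_nonempty hiso hx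
  have hgS' : s₂⁻¹ * g * s₁ ∉ S := fun h => hgS <| by
    simpa [mul_assoc] using S.mul_mem (S.mul_mem hs₂ h) (S.inv_mem hs₁)
  exact hFG' _ ⟨hC.ne_empty, hgS'⟩
    (G'.mul_mem (G'.mul_mem (G'.inv_mem (hSG' hs₂)) hg) (hSG' hs₁))

/-- if the stabilizer of `Y` acts cocompactly on `Y` and is
closed in `G` for the profinite topology, and the action of `G` on the proper
space `X` is metrically proper, then some finite-index subgroup `G'` of `G`
containing `Stab(Y)` satisfies: for every `g ∈ G'` outside `Stab(Y)`, the
overlap `gY^{+20δ} ∩ Y^{+20δ}` has diameter at most `Δ`. -/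
theorem exists_finiteIndex_subgroup_small_overlap
    {X : Type*} [MetricSpace X] [ProperSpace X]
    {G : Type*} [Group G] [MulAction G X]
    (hiso : ∀ g : G, Isometry (fun x : X => g • x))
    (hproper : ∀ C : Set X, IsCompact C → Set.Finite {g : G | (g • C) ∩ C ≠ ∅})
    (δ Δ : ℝ) (hδ : 0 ≤ δ) (hΔ : 0 ≤ Δ)
    (Y : Set X)
    (hcocompact : ∃ K : Set X, IsCompact K ∧ K ⊆ Y ∧
      (⋃ g ∈ MulAction.stabilizer G Y, g • K) = Y)
    (hclosed : ∀ g : G, g ∉ MulAction.stabilizer G Y →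
      ∃ N : Subgroup G, N.Normal ∧ N.FiniteIndex ∧
        ∀ h ∈ MulAction.stabilizer G Y, ∀ n ∈ N, g ≠ h * n) :
    ∃ G' : Subgroup G, G'.FiniteIndex ∧ MulAction.stabilizer G Y ≤ G' ∧
      ∀ g ∈ G', g ∉ MulAction.stabilizer G Y →
        EMetric.diam (nbhd (20 * δ) (g • Y) ∩ nbhd (20 * δ) Y) ≤
          ENNReal.ofReal Δ :=
  exists_finiteIndex_subgroup_small_overlap_general hiso hproper δ Δ Y hcocompact hclosed
end
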